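/- For every nonzero signal f in ℂ^N, the product of the size of the support of f and the size of the support of its discrete Fourier transform is at least N. -/

import Mathlib

/-!
For the unnormalised transform `𝓕`, every Fourier coefficient is bounded by the `ℓ¹` norm of
the signal, and by Fourier inversion `N ‖f t‖` is bounded by the `ℓ¹` norm of `𝓕 f`. An `ℓ¹`
norm is at most the size of the support times the sup norm, so chaining the two bounds gives
`N ‖f‖₁ ≤ |supp f| |supp 𝓕 f| ‖f‖₁`. The normalisation of the transform does not change its
support.
-/

open scoped Classical

/-- The unitary discrete Fourier transform on `ℂ^N`. -/
noncomputable def dft (N : ℕ) [NeZero N] (f : ZMod N → ℂ) : ZMod N → ℂ :=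
  fun ω => (1 / Real.sqrt N : ℂ) *
    ∑ t : ZMod N, f t *
      Complex.exp (-(2 * Real.pi * Complex.I * (ω.val : ℂ) * (t.val : ℂ)) / N)

/-- The support of a finite signal, as a finset. -/
noncomputable def dsupp (N : ℕ) [NeZero N] (f : ZMod N → ℂ) : Finset (ZMod N) :=
  Finset.univ.filter (fun t => f t ≠ 0)

open Finset ZMod

section

variable {N : ℕ} [NeZero N]

lemma norm_dft_apply_le_sum_norm {E : Type*} [SeminormedAddCommGroup E] [NormedSpace ℂ E]
    (Φ : ZMod N → E) (k : ZMod N) : ‖𝓕 Φ k‖ ≤ ∑ j, ‖Φ j‖ := by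
  rw [dft_apply]
  refine (norm_sum_le _ _).trans_eq (sum_congr rfl fun j _ => ?_)
  rw [norm_smul, stdAddChar_apply, Circle.norm_coe, one_mul]

lemma sum_norm_le_card_dsupp_mul (g : ZMod N → ℂ) {C : ℝ} (hC : ∀ j, ‖g j‖ ≤ C) :
    ∑ j, ‖g j‖ ≤ #(dsupp N g) * C := by
  rw [← sum_filter_of_ne (p := fun j => g j ≠ 0) fun j _ h => norm_ne_zero_iff.mp h]
  exact (sum_le_card_nsmul _ _ _ fun j _ => hC j).trans_eq (nsmul_eq_mul _ _)

lemma natCast_mul_norm_le_sum_norm_dft (Φ : ZMod N → ℂ) (j : ZMod N) :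
    N * ‖Φ j‖ ≤ ∑ k, ‖𝓕 Φ k‖ := by
  have hinv : 𝓕 (𝓕 Φ) (-j) = N * Φ j := by
    simp only [dft_dft, neg_neg, smul_eq_mul]
  calc (N : ℝ) * ‖Φ j‖ = ‖𝓕 (𝓕 Φ) (-j)‖ := by rw [hinv, norm_mul, Complex.norm_natCast]
    _ ≤ ∑ k, ‖𝓕 Φ k‖ := norm_dft_apply_le_sum_norm _ _

theorem le_card_dsupp_mul_card_dsupp_dft {Φ : ZMod N → ℂ} (hΦ : Φ ≠ 0) :
    N ≤ #(dsupp N Φ) * #(dsupp N (𝓕 Φ)) := by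
  set S := ∑ j, ‖Φ j‖
  have hN : (0 : ℝ) < N := by exact_mod_cast Nat.pos_of_neZero N
  have hS : 0 < S := by
    obtain ⟨j, hj⟩ := Function.ne_iff.mp hΦ
    exact sum_pos' (fun _ _ => norm_nonneg _) ⟨j, mem_univ _, norm_pos_iff.mpr hj⟩
  have hΦ_le : ∀ j, ‖Φ j‖ ≤ #(dsupp N (𝓕 Φ)) * S / N := fun j => by
    rw [le_div_iff₀ hN, mul_comm]
    exact (natCast_mul_norm_le_sum_norm_dft Φ j).trans
      (sum_norm_le_card_dsupp_mul _ (norm_dft_apply_le_sum_norm Φ))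
  have key : S ≤ #(dsupp N Φ) * (#(dsupp N (𝓕 Φ)) * S / N) :=
    sum_norm_le_card_dsupp_mul Φ hΦ_le
  rw [mul_div_assoc', le_div_iff₀ hN, ← mul_assoc, mul_comm S, mul_le_mul_iff_left₀ hS] at key
  exact_mod_cast key

lemma cexp_neg_two_pi_mul_val_eq_stdAddChar (ω t : ZMod N) :
    Complex.exp (-(2 * Real.pi * Complex.I * (ω.val : ℂ) * (t.val : ℂ)) / N)
      = stdAddChar (-(t * ω)) := by
  have h : ((-(t.val * ω.val : ℤ) : ℤ) : ZMod N) = -(t * ω) := by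
    push_cast
    simp only [natCast_zmod_val]
  rw [← h, stdAddChar_coe]
  push_cast
  ring_nf

lemma dft_eq_smul_dft (f : ZMod N → ℂ) : dft N f = (1 / Real.sqrt N : ℂ) • 𝓕 f := by
  ext ω
  simp only [_root_.dft, Pi.smul_apply, dft_apply, smul_eq_mul,
    cexp_neg_two_pi_mul_val_eq_stdAddChar, mul_comm (f _)]

lemma dsupp_smul {c : ℂ} (hc : c ≠ 0) (g : ZMod N → ℂ) : dsupp N (c • g) = dsupp N g := by
  simp [dsupp, hc]

end

/-- Multiplicative discrete uncertainty principle: `|supp f| · |supp f̂| ≥ N`. -/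
theorem stmt_1 (N : ℕ) [NeZero N] (f : ZMod N → ℂ) (hf : f ≠ 0) :
    N ≤ (dsupp N f).card * (dsupp N (dft N f)).card := by
  have hc : (1 / Real.sqrt N : ℂ) ≠ 0 := by
    have : (0 : ℝ) < N := by exact_mod_cast Nat.pos_of_neZero N
    simp [this.ne']
  rw [dft_eq_smul_dft, dsupp_smul hc]
  exact le_card_dsupp_mul_card_dsupp_dft hf
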